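/- arXiv:2001.01079 — 3 statements merged into one kernel-verified Lean document; each statement's English description precedes it below -/
import Mathlib

section
/- For a Bregman divergence D_B(p‖q) = f(p) − f(q) − ⟪∇f(q), p − q⟫ generated by a differentiable strictly convex f : ℝ^d → ℝ, the weighted mean p* = ∑_i α_i p_i is the unique minimizer of r ↦ ∑_i α_i D_B(p_i‖r). -/
open Set

lemma bregman_key {d : ℕ} (f : EuclideanSpace ℝ (Fin d) → ℝ)
    (gf : EuclideanSpace ℝ (Fin d) → EuclideanSpace ℝ (Fin d))
    (hgrad : ∀ x, HasGradientAt f (gf x) x)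
    (hconv : StrictConvexOn ℝ Set.univ f)
    {x y : EuclideanSpace ℝ (Fin d)} (h : x ≠ y) :
    f x + (inner ℝ (gf x) (y - x) : ℝ) < f y := by
  set v := y - x with hvdef
  have hv : v ≠ 0 := sub_ne_zero.mpr (Ne.symm h)
  set g : ℝ → ℝ := fun t => f (x + t • v) with hg
  have hgc : StrictConvexOn ℝ Set.univ g := by
    refine ⟨convex_univ, fun s _ t _ hst a b ha hb hab => ?_⟩
    have hne : x + s • v ≠ x + t • v := by
      intro hcon
      exact hst (smul_left_injective ℝ hv (by simpa using hcon))
    have hcomb : a • (x + s • v) + b • (x + t • v) = x + (a * s + b * t) • v := by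
      calc a • (x + s • v) + b • (x + t • v)
          = (a + b) • x + (a * s + b * t) • v := by
            simp only [smul_add, smul_smul, add_smul]; abel
        _ = x + (a * s + b * t) • v := by rw [hab, one_smul]
    have := hconv.2 (Set.mem_univ (x + s • v)) (Set.mem_univ (x + t • v)) hne ha hb hab
    rw [hcomb] at this
    simpa [hg, smul_eq_mul] using this
  have hline : HasDerivAt (fun t : ℝ => x + t • v) v (0 : ℝ) := by
    simpa using ((hasDerivAt_id (0 : ℝ)).smul_const v).const_add x
  have hfder : HasFDerivAt f (InnerProductSpace.toDual ℝ _ (gf x)) x := hgrad x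
  have hgd : HasDerivAt g ((inner ℝ (gf x) v : ℝ)) 0 := by
    have hfder' : HasFDerivAt f (InnerProductSpace.toDual ℝ _ (gf x))
        ((fun t : ℝ => x + t • v) 0) := by simpa using hfder
    have := hfder'.comp_hasDerivAt (0 : ℝ) hline
    exact this
  have hslope := hgc.lt_slope_of_hasDerivAt (Set.mem_univ (0:ℝ)) (Set.mem_univ (1:ℝ))
    one_pos hgd
  have : (inner ℝ (gf x) v : ℝ) < g 1 - g 0 := by
    simpa [slope_def_field, slope, hg] using hslope
  simp only [hg, zero_smul, add_zero, one_smul, hvdef] at this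
  have hxy : x + (y - x) = y := by abel
  rw [hxy] at this
  linarith

/-- For the Bregman divergence `D_B(p‖q) = f(p) − f(q) − ⟪∇f(q), p − q⟫`
generated by a differentiable strictly convex `f : ℝ^d → ℝ`, the weighted mean
`p* = ∑ i, α i • p i` is the unique minimizer of `r ↦ ∑ i, α i * D_B(p i‖r)`. -/
theorem stmt_7 {d N : ℕ}
    (f : EuclideanSpace ℝ (Fin d) → ℝ)
    (gf : EuclideanSpace ℝ (Fin d) → EuclideanSpace ℝ (Fin d))
    (hgrad : ∀ x, HasGradientAt f (gf x) x)
    (hconv : StrictConvexOn ℝ Set.univ f)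
    (p : Fin N → EuclideanSpace ℝ (Fin d))
    (α : Fin N → ℝ) (hα : ∀ i, 0 ≤ α i) (hsum : ∑ i, α i = 1)
    (DB : EuclideanSpace ℝ (Fin d) → EuclideanSpace ℝ (Fin d) → ℝ)
    (hDB : ∀ x y, DB x y = f x - f y - (inner ℝ (gf y) (x - y) : ℝ)) :
    ∀ r : EuclideanSpace ℝ (Fin d), r ≠ ∑ i, α i • p i →
      ∑ i, α i * DB (p i) (∑ j, α j • p j) < ∑ i, α i * DB (p i) r := by
  intro r hr
  set m : EuclideanSpace ℝ (Fin d) := ∑ i, α i • p i with hm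
  have hexp : ∀ q : EuclideanSpace ℝ (Fin d),
      ∑ i, α i * DB (p i) q = (∑ i, α i * f (p i)) - f q - (inner ℝ (gf q) (m - q) : ℝ) := by
    intro q
    have hsum' : ∑ i, α i * ((inner ℝ (gf q) (p i - q)) : ℝ)
        = (inner ℝ (gf q) (m - q) : ℝ) := by
      rw [hm]
      rw [show ((∑ i, α i • p i) - q : EuclideanSpace ℝ (Fin d))
          = ∑ i, (α i • p i - α i • q) by
        rw [Finset.sum_sub_distrib, ← Finset.sum_smul, hsum, one_smul]]
      rw [inner_sum]
      congr 1; ext i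
      rw [← smul_sub, real_inner_smul_right]
    calc ∑ i, α i * DB (p i) q
        = ∑ i, (α i * f (p i) - α i * f q - α i * (inner ℝ (gf q) (p i - q) : ℝ)) := by
          congr 1; ext i; rw [hDB]; ring
      _ = (∑ i, α i * f (p i)) - (∑ i, α i) * f q
            - ∑ i, α i * ((inner ℝ (gf q) (p i - q)) : ℝ) := by
          rw [Finset.sum_sub_distrib, Finset.sum_sub_distrib, Finset.sum_mul]
      _ = _ := by rw [hsum, hsum', one_mul]
  rw [hexp m, hexp r]
  have hkey := bregman_key f gf hgrad hconv hr
  have : (inner ℝ (gf m) (m - m) : ℝ) = 0 := by simp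
  rw [this]
  linarith
end

section
/- Projection onto a divergence ball: let D be differentiable and strictly convex in the second argument, let P ≠ Q, and suppose P* lies on the boundary ∂B_κ(P) (D(P‖P*) = κ) and satisfies (1−α)∇₂D(P‖P*) + α∇₂D(Q‖P*) = 0 for some α ∈ (0,1]. Then P* is the unique minimizer of R ↦ D(Q‖R) over the ball B_κ(P) = { R : D(P‖R) ≤ κ }. -/
open Set

section FirstOrder

variable {E : Type*} [NormedAddCommGroup E] [NormedSpace ℝ E]
  {s : Set E} {f : E → ℝ} {f' : E →L[ℝ] ℝ} {x y : E}

theorem ConvexOn.apply_sub_le_of_hasFDerivAt (hf : ConvexOn ℝ s f) (hx : x ∈ s) (hy : y ∈ s)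
    (hf' : HasFDerivAt f f' x) : f' (y - x) ≤ f y - f x := by
  set L : ℝ →ᵃ[ℝ] E := AffineMap.lineMap x y
  have hL : ∀ t : ℝ, L t = t • (y - x) + x := fun t => AffineMap.lineMap_apply_module' x y t
  have hφ : ConvexOn ℝ (L ⁻¹' s) (f ∘ L) := hf.comp_affineMap L
  have hderiv : HasDerivAt (f ∘ L) (f' (y - x)) 0 := by
    have hline : HasDerivAt (fun t : ℝ => t • (y - x) + x) (y - x) 0 := by
      simpa using ((hasDerivAt_id (0 : ℝ)).smul_const (y - x)).add_const x
    rw [show (L : ℝ → E) = fun t => t • (y - x) + x from funext hL]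
    exact hf'.comp_hasDerivAt_of_eq 0 hline (by simp)
  have hslope := hφ.le_slope_of_hasDerivAt (by simpa [hL] using hx) (by simpa [hL] using hy)
    one_pos hderiv
  simpa [slope, hL] using hslope

theorem StrictConvexOn.apply_sub_lt_of_hasFDerivAt (hf : StrictConvexOn ℝ s f) (hx : x ∈ s)
    (hy : y ∈ s) (hf' : HasFDerivAt f f' x) (hxy : x ≠ y) : f' (y - x) < f y - f x := by
  -- the non-strict bound at the midpoint, plus the strict gap of `f` there
  have hm := hf.convexOn.apply_sub_le_of_hasFDerivAt hx
    (hf.1.segment_subset hx hy (midpoint_mem_segment x y)) hf'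
  have hmid : f (midpoint ℝ x y) < 2⁻¹ * f x + 2⁻¹ * f y := by
    simpa [midpoint_eq_smul_add, smul_add] using
      hf.2 hx hy hxy (by norm_num : (0 : ℝ) < 2⁻¹) (by norm_num : (0 : ℝ) < 2⁻¹) (by norm_num)
  have hmx : midpoint ℝ x y - x = (2⁻¹ : ℝ) • (y - x) := by
    rw [midpoint_eq_smul_add, invOf_eq_inv]
    module
  rw [hmx, map_smul, smul_eq_mul] at hm
  linarith

end FirstOrder

theorem StrictConvexOn.inner_sub_lt_of_hasGradientAt {F : Type*} [NormedAddCommGroup F]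
    [InnerProductSpace ℝ F] [CompleteSpace F] {s : Set F} {f : F → ℝ} {G x y : F}
    (hf : StrictConvexOn ℝ s f) (hx : x ∈ s) (hy : y ∈ s) (hG : HasGradientAt f G x)
    (hxy : x ≠ y) : inner ℝ G (y - x) < f y - f x := by
  simpa using hf.apply_sub_lt_of_hasFDerivAt hx hy hG.hasFDerivAt hxy

theorem stmt_15_general {d : ℕ}
    (D : EuclideanSpace ℝ (Fin d) → EuclideanSpace ℝ (Fin d) → ℝ)
    (g : EuclideanSpace ℝ (Fin d) → EuclideanSpace ℝ (Fin d) → EuclideanSpace ℝ (Fin d))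
    (hgrad : ∀ p q, HasGradientAt (fun x => D p x) (g p q) q)
    (hconv : ∀ p, StrictConvexOn ℝ Set.univ (fun x => D p x))
    (p q pstar : EuclideanSpace ℝ (Fin d))
    (κ : ℝ) (hboundary : D p pstar = κ)
    (α : ℝ) (hα : α ∈ Set.Ioc (0:ℝ) 1)
    (hstat : (1 - α) • g p pstar + α • g q pstar = 0) :
    ∀ r : EuclideanSpace ℝ (Fin d), D p r ≤ κ → r ≠ pstar →
      D q pstar < D q r := by
  intro r hr hne
  obtain ⟨hα0, hα1⟩ := hα
  have hP := (hconv p).inner_sub_lt_of_hasGradientAt (mem_univ _) (mem_univ r) (hgrad p pstar)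
    hne.symm
  have hQ := (hconv q).inner_sub_lt_of_hasGradientAt (mem_univ _) (mem_univ r) (hgrad q pstar)
    hne.symm
  have hcomb : (1 - α) * inner ℝ (g p pstar) (r - pstar) + α * inner ℝ (g q pstar) (r - pstar)
      = 0 := by
    rw [← real_inner_smul_left, ← real_inner_smul_left, ← inner_add_left, hstat, inner_zero_left]
  have hP_neg : inner ℝ (g p pstar) (r - pstar) < 0 := by linarith
  -- by stationarity, a direction into the ball cannot decrease `D q` to first order
  have hQ_nonneg : 0 ≤ inner ℝ (g q pstar) (r - pstar) := by
    nlinarith [mul_nonneg (sub_nonneg.2 hα1) (neg_nonneg.2 hP_neg.le)]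
  linarith

/-- Projection onto a divergence ball: let `D` be a differentiable and
strictly convex (second argument) divergence, `p ≠ q`, `κ > 0`, and suppose
`D(p‖p*) = κ` and `(1−α) • ∇₂D(p‖p*) + α • ∇₂D(q‖p*) = 0` for some `α ∈ (0,1]`.
Then `p*` is the unique minimizer of `r ↦ D(q‖r)` over the ball `{ r : D(p‖r) ≤ κ }`. -/
theorem stmt_15 {d : ℕ}
    (D : EuclideanSpace ℝ (Fin d) → EuclideanSpace ℝ (Fin d) → ℝ)
    (g : EuclideanSpace ℝ (Fin d) → EuclideanSpace ℝ (Fin d) → EuclideanSpace ℝ (Fin d))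
    (hnonneg : ∀ p q, 0 ≤ D p q)
    (hzero : ∀ p q, D p q = 0 ↔ p = q)
    (hgrad : ∀ p q, HasGradientAt (fun x => D p x) (g p q) q)
    (hconv : ∀ p, StrictConvexOn ℝ Set.univ (fun x => D p x))
    (p q pstar : EuclideanSpace ℝ (Fin d)) (hpq : p ≠ q)
    (κ : ℝ) (hκ : 0 < κ) (hboundary : D p pstar = κ)
    (α : ℝ) (hα : α ∈ Set.Ioc (0:ℝ) 1)
    (hstat : (1 - α) • g p pstar + α • g q pstar = 0) :
    ∀ r : EuclideanSpace ℝ (Fin d), D p r ≤ κ → r ≠ pstar →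
      D q pstar < D q r :=
  stmt_15_general D g hgrad hconv p q pstar κ hboundary α hα hstat
end

section
/- Tangency of two divergence balls: if P* satisfies D(P‖P*) = κ₁, D(Q‖P*) = κ₂, and (1−α)∇₂D(P‖P*) + α∇₂D(Q‖P*) = 0 for some α ∈ (0,1), then the intersection of the two balls B_{κ₁}(P) ∩ B_{κ₂}(Q) equals the singleton {P*}. -/
/-!
Put `F = (1 - α) D(p‖·) + α D(q‖·)`. It is strictly convex, and the stationarity condition says
that its gradient vanishes at `p*`, so `p*` is the unique global minimiser of `F`. Any `r` in both
balls has `F r ≤ (1 - α) κ₁ + α κ₂ = F p*`, hence is also a minimiser, hence equals `p*`.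
-/

open Set

theorem StrictConvexOn.smul {𝕜 E β : Type*} [CommSemiring 𝕜] [PartialOrder 𝕜] [AddCommMonoid E]
    [AddCommMonoid β] [PartialOrder β] [SMul 𝕜 E] [Module 𝕜 β] [PosSMulStrictMono 𝕜 β]
    {s : Set E} {f : E → β} {c : 𝕜} (hc : 0 < c) (hf : StrictConvexOn 𝕜 s f) :
    StrictConvexOn 𝕜 s fun x => c • f x :=
  ⟨hf.1, fun x hx y hy hxy a b ha hb hab =>
    calc
      c • f (a • x + b • y) < c • (a • f x + b • f y) :=
        smul_lt_smul_of_pos_left (hf.2 hx hy hxy ha hb hab) hc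
      _ = a • c • f x + b • c • f y := by rw [smul_add, smul_comm c, smul_comm c]⟩

section NormedSpace

variable {E : Type*} [NormedAddCommGroup E] [NormedSpace ℝ E]

theorem ConvexOn.isMinOn_of_hasFDerivAt_eq_zero {f : E → ℝ} {x : E} (hf : ConvexOn ℝ univ f)
    (hx : HasFDerivAt f (0 : E →L[ℝ] ℝ) x) : IsMinOn f univ x := by
  intro y _
  let φ : ℝ → ℝ := fun t => f (AffineMap.lineMap (k := ℝ) x y t)
  have hφ : ConvexOn ℝ univ φ := hf.comp_affineMap (AffineMap.lineMap x y)
  have hφ' : HasDerivAt φ 0 0 := by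
    have hx' : HasFDerivAt f (0 : E →L[ℝ] ℝ) (AffineMap.lineMap x y (0 : ℝ)) := by simpa using hx
    have := hx'.comp_hasDerivAt (0 : ℝ) AffineMap.hasDerivAt_lineMap
    rwa [zero_apply] at this
  simpa [φ, slope] using hφ.le_slope_of_hasDerivAt (mem_univ 0) (mem_univ 1) one_pos hφ'

theorem StrictConvexOn.sublevel_inter_sublevel_eq_singleton {f₁ f₂ : E → ℝ}
    {f₁' f₂' : E →L[ℝ] ℝ} {x : E} {α : ℝ} (h₁ : StrictConvexOn ℝ univ f₁)
    (h₂ : ConvexOn ℝ univ f₂) (hd₁ : HasFDerivAt f₁ f₁' x) (hd₂ : HasFDerivAt f₂ f₂' x)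
    (hα : α ∈ Ioo (0 : ℝ) 1) (hstat : (1 - α) • f₁' + α • f₂' = 0) :
    {y | f₁ y ≤ f₁ x} ∩ {y | f₂ y ≤ f₂ x} = {x} := by
  obtain ⟨hα₀, hα₁⟩ := hα
  let F : E → ℝ := fun y => (1 - α) • f₁ y + α • f₂ y
  have hF : StrictConvexOn ℝ univ F := (h₁.smul (sub_pos.2 hα₁)).add_convexOn (h₂.smul hα₀.le)
  have hFd : HasFDerivAt F (0 : E →L[ℝ] ℝ) x := by
    have hsum := (hd₁.const_smul (1 - α)).add (hd₂.const_smul α)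
    rwa [hstat] at hsum
  have hmin : IsMinOn F univ x := hF.convexOn.isMinOn_of_hasFDerivAt_eq_zero hFd
  ext y
  constructor
  · rintro ⟨hy₁ : f₁ y ≤ f₁ x, hy₂ : f₂ y ≤ f₂ x⟩
    have hFy : F y ≤ F x := by
      simp only [F, smul_eq_mul]
      gcongr
    exact hF.eq_of_isMinOn (fun z _ => hFy.trans (hmin (mem_univ z))) hmin trivial trivial
  · rintro rfl
    exact ⟨le_refl (f₁ y), le_refl (f₂ y)⟩

end NormedSpace

theorem stmt_16_general {d : ℕ}
    (D : EuclideanSpace ℝ (Fin d) → EuclideanSpace ℝ (Fin d) → ℝ)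
    (g : EuclideanSpace ℝ (Fin d) → EuclideanSpace ℝ (Fin d) → EuclideanSpace ℝ (Fin d))
    (hgrad : ∀ p q, HasGradientAt (fun x => D p x) (g p q) q)
    (hconv : ∀ p, StrictConvexOn ℝ Set.univ (fun x => D p x))
    (p q pstar : EuclideanSpace ℝ (Fin d))
    (κ₁ κ₂ : ℝ)
    (hb₁ : D p pstar = κ₁) (hb₂ : D q pstar = κ₂)
    (α : ℝ) (hα : α ∈ Set.Ioo (0:ℝ) 1)
    (hstat : (1 - α) • g p pstar + α • g q pstar = 0) :
    {r : EuclideanSpace ℝ (Fin d) | D p r ≤ κ₁} ∩ {r | D q r ≤ κ₂} = {pstar} := by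
  subst hb₁ hb₂
  have hstat' : (1 - α) • InnerProductSpace.toDual ℝ _ (g p pstar) +
      α • InnerProductSpace.toDual ℝ _ (g q pstar) = 0 := by
    rw [← map_smul, ← map_smul, ← map_add, hstat, map_zero]
  exact (hconv p).sublevel_inter_sublevel_eq_singleton (hconv q).convexOn
    (hgrad p pstar).hasFDerivAt (hgrad q pstar).hasFDerivAt hα hstat'

/-- Tangency of two divergence balls: if `p*` satisfies
`D(p‖p*) = κ₁`, `D(q‖p*) = κ₂`, and
`(1−α) • ∇₂D(p‖p*) + α • ∇₂D(q‖p*) = 0` for some `α ∈ (0,1)`, then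
`B_{κ₁}(p) ∩ B_{κ₂}(q) = {p*}`. -/
theorem stmt_16 {d : ℕ}
    (D : EuclideanSpace ℝ (Fin d) → EuclideanSpace ℝ (Fin d) → ℝ)
    (g : EuclideanSpace ℝ (Fin d) → EuclideanSpace ℝ (Fin d) → EuclideanSpace ℝ (Fin d))
    (hnonneg : ∀ p q, 0 ≤ D p q)
    (hzero : ∀ p q, D p q = 0 ↔ p = q)
    (hgrad : ∀ p q, HasGradientAt (fun x => D p x) (g p q) q)
    (hconv : ∀ p, StrictConvexOn ℝ Set.univ (fun x => D p x))
    (p q pstar : EuclideanSpace ℝ (Fin d)) (hpq : p ≠ q)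
    (κ₁ κ₂ : ℝ) (hκ₁ : 0 < κ₁) (hκ₂ : 0 < κ₂)
    (hb₁ : D p pstar = κ₁) (hb₂ : D q pstar = κ₂)
    (α : ℝ) (hα : α ∈ Set.Ioo (0:ℝ) 1)
    (hstat : (1 - α) • g p pstar + α • g q pstar = 0) :
    {r : EuclideanSpace ℝ (Fin d) | D p r ≤ κ₁} ∩ {r | D q r ≤ κ₂} = {pstar} :=
  stmt_16_general D g hgrad hconv p q pstar κ₁ κ₂ hb₁ hb₂ α hα hstat
end
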